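/- arXiv:2103.05452 — 2 statements merged into one kernel-verified Lean document; each statement's English description precedes it below -/
import Mathlib

section
/- Let G ≤ Aut(T) be a weakly branch group. Then for every integer s ≥ 1 the s-th Basilica group Bas_s(G) is a weakly branch group. -/
/-!
Groups of automorphisms of the `m`-regular rooted tree, encoded via portraits:
an automorphism is determined by the family of its labels (local actions)
`label : List (Fin m) → Equiv.Perm (Fin m)`.
-/

namespace Basilica

/-- An automorphism of the `m`-regular rooted tree, given by its portrait. -/
structure TreeAut (m : ℕ) where
  label : List (Fin m) → Equiv.Perm (Fin m)

namespace TreeAut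

variable {m : ℕ}

lemma ext_label {a b : TreeAut m} (h : ∀ u, a.label u = b.label u) : a = b := by
  cases a
  cases b
  simp only [mk.injEq]
  exact funext h

/-- The section of an automorphism at a vertex. -/
def sec (a : TreeAut m) (v : List (Fin m)) : TreeAut m := ⟨fun u => a.label (v ++ u)⟩

@[simp] lemma sec_label (a : TreeAut m) (v u : List (Fin m)) :
    (a.sec v).label u = a.label (v ++ u) := rfl

@[simp] lemma sec_nil (a : TreeAut m) : a.sec [] = a := rfl

lemma sec_sec (a : TreeAut m) (v w : List (Fin m)) : (a.sec v).sec w = a.sec (v ++ w) :=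
  ext_label fun u => by simp [List.append_assoc]

/-- The action of a tree automorphism on the vertices (finite words). -/
def apply : TreeAut m → List (Fin m) → List (Fin m)
  | _, [] => []
  | a, x :: u => a.label [] x :: (a.sec [x]).apply u

/-- The inverse action of a tree automorphism on the vertices. -/
def invApply : TreeAut m → List (Fin m) → List (Fin m)
  | _, [] => []
  | a, x :: u => (a.label [])⁻¹ x :: (a.sec [(a.label [])⁻¹ x]).invApply u

instance : One (TreeAut m) := ⟨⟨fun _ => 1⟩⟩
instance : Mul (TreeAut m) := ⟨fun a b => ⟨fun u => a.label (b.apply u) * b.label u⟩⟩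
instance : Inv (TreeAut m) := ⟨fun a => ⟨fun u => (a.label (a.invApply u))⁻¹⟩⟩

@[simp] lemma one_label (u : List (Fin m)) : (1 : TreeAut m).label u = 1 := rfl

@[simp] lemma mul_label (a b : TreeAut m) (u : List (Fin m)) :
    (a * b).label u = a.label (b.apply u) * b.label u := rfl

@[simp] lemma inv_label (a : TreeAut m) (u : List (Fin m)) :
    a⁻¹.label u = (a.label (a.invApply u))⁻¹ := rfl

@[simp] lemma one_sec (v : List (Fin m)) : (1 : TreeAut m).sec v = 1 := rfl

@[simp] lemma apply_nil (a : TreeAut m) : a.apply [] = [] := rfl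

lemma apply_cons (a : TreeAut m) (x : Fin m) (u : List (Fin m)) :
    a.apply (x :: u) = a.label [] x :: (a.sec [x]).apply u := rfl

@[simp] lemma one_apply (u : List (Fin m)) : (1 : TreeAut m).apply u = u := by
  induction u with
  | nil => rfl
  | cons x u ih => simp [apply_cons, ih]

lemma apply_append (a : TreeAut m) (v u : List (Fin m)) :
    a.apply (v ++ u) = a.apply v ++ (a.sec v).apply u := by
  induction v generalizing a with
  | nil => simp
  | cons x v ih =>
      simp only [List.cons_append, apply_cons, ih, sec_sec, List.singleton_append,
        List.nil_append]

lemma mul_sec (a b : TreeAut m) (v : List (Fin m)) :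
    (a * b).sec v = a.sec (b.apply v) * b.sec v :=
  ext_label fun u => by simp [apply_append]

lemma mul_apply (a b : TreeAut m) (u : List (Fin m)) :
    (a * b).apply u = a.apply (b.apply u) := by
  induction u generalizing a b with
  | nil => rfl
  | cons x u ih =>
      rw [apply_cons, mul_sec, ih]
      simp [apply_cons, Equiv.Perm.mul_apply]

lemma invApply_apply (a : TreeAut m) (u : List (Fin m)) : a.invApply (a.apply u) = u := by
  induction u generalizing a with
  | nil => rfl
  | cons x u ih => simp [apply_cons, invApply, ih]

lemma apply_invApply (a : TreeAut m) (u : List (Fin m)) : a.apply (a.invApply u) = u := by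
  induction u generalizing a with
  | nil => rfl
  | cons x u ih => simp [invApply, apply_cons, ih]

instance : Group (TreeAut m) where
  mul_assoc a b c := ext_label fun u => by simp [mul_apply, mul_assoc]
  one_mul a := ext_label fun u => by simp
  mul_one a := ext_label fun u => by simp
  inv_mul_cancel a := ext_label fun u => by simp [invApply_apply]

lemma apply_injective (a : TreeAut m) : Function.Injective a.apply := by
  intro x y h
  have hx := invApply_apply a x
  rw [h, invApply_apply] at hx
  exact hx.symm

@[simp] lemma apply_length (a : TreeAut m) (u : List (Fin m)) :
    (a.apply u).length = u.length := by
  induction u generalizing a with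
  | nil => rfl
  | cons x u ih => simp [apply_cons, ih]

/-- `cons ρ f` is `ρ · ψ₁⁻¹(f 0, …, f (m-1))`: the automorphism with root label `ρ`
and first-layer sections `f x`. -/
def cons (ρ : Equiv.Perm (Fin m)) (f : Fin m → TreeAut m) : TreeAut m :=
  ⟨fun u =>
    match u with
    | [] => ρ
    | x :: v => (f x).label v⟩

end TreeAut

variable {m : ℕ}

/-- The `n`-th layer stabiliser `St_G(n)` of a group `G` of tree automorphisms. -/
def layerStab (G : Subgroup (TreeAut m)) (n : ℕ) : Subgroup (TreeAut m) where
  carrier := {g | g ∈ G ∧ ∀ u : List (Fin m), u.length = n → g.apply u = u}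
  one_mem' := ⟨G.one_mem, fun u _ => TreeAut.one_apply u⟩
  mul_mem' := by
    rintro a b ⟨haG, ha⟩ ⟨hbG, hb⟩
    refine ⟨G.mul_mem haG hbG, fun u hu => ?_⟩
    rw [TreeAut.mul_apply, hb u hu, ha u hu]
  inv_mem' := by
    rintro a ⟨haG, ha⟩
    refine ⟨G.inv_mem haG, fun u hu => ?_⟩
    apply TreeAut.apply_injective a
    rw [← TreeAut.mul_apply, mul_inv_cancel, TreeAut.one_apply, ha u hu]

/-- A group of tree automorphisms acts spherically transitively if it acts
transitively on every layer. -/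
def SphericallyTransitive (G : Subgroup (TreeAut m)) : Prop :=
  ∀ u v : List (Fin m), u.length = v.length → ∃ g ∈ G, g.apply u = v

/-- A group of tree automorphisms is self-similar if it is closed under sections. -/
def SelfSimilar (G : Subgroup (TreeAut m)) : Prop :=
  ∀ g ∈ G, ∀ v : List (Fin m), g.sec v ∈ G

/-- A spherically transitive group is fractal if `st_G(u)|_u = G` for all vertices `u`. -/
def Fractal (G : Subgroup (TreeAut m)) : Prop :=
  SphericallyTransitive G ∧
    ∀ u : List (Fin m),
      {h : TreeAut m | ∃ g ∈ G, g.apply u = u ∧ g.sec u = h} = (G : Set (TreeAut m))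

/-- A spherically transitive group is strongly fractal if `St_G(1)|_x = G` for all `x ∈ X`. -/
def StronglyFractal (G : Subgroup (TreeAut m)) : Prop :=
  SphericallyTransitive G ∧
    ∀ x : Fin m,
      {h : TreeAut m | ∃ g ∈ layerStab G 1, g.sec [x] = h} = (G : Set (TreeAut m))

/-- A spherically transitive group is very strongly fractal if
`St_G(n+1)|_x = St_G(n)` for all `n` and `x ∈ X`. -/
def VeryStronglyFractal (G : Subgroup (TreeAut m)) : Prop :=
  SphericallyTransitive G ∧
    ∀ (n : ℕ) (x : Fin m),
      {h : TreeAut m | ∃ g ∈ layerStab G (n + 1), g.sec [x] = h}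
        = (layerStab G n : Set (TreeAut m))

/-- A group of tree automorphisms is contracting if it has a finite nucleus. -/
def Contracting (G : Subgroup (TreeAut m)) : Prop :=
  ∃ N : Set (TreeAut m), N.Finite ∧ N ⊆ (G : Set (TreeAut m)) ∧
    ∀ g ∈ G, ∃ k : ℕ, ∀ v : List (Fin m), k < v.length → g.sec v ∈ N

/-- A tree automorphism is finite-state if it has finitely many distinct sections. -/
def FiniteState (f : TreeAut m) : Prop :=
  {h : TreeAut m | ∃ u : List (Fin m), f.sec u = h}.Finite

/-- A tree automorphism is bounded if the number of nontrivial sections at the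
`n`-th layer is bounded uniformly in `n`. -/
def BoundedAut (f : TreeAut m) : Prop :=
  ∃ C : ℕ, ∀ n : ℕ, {u : List (Fin m) | u.length = n ∧ f.sec u ≠ 1}.ncard ≤ C

/-- The `n`-th rigid layer stabiliser: the subgroup generated by the rigid vertex
stabilisers of the vertices of the `n`-th layer. -/
def rigidLayerStab (G : Subgroup (TreeAut m)) (n : ℕ) : Subgroup (TreeAut m) :=
  Subgroup.closure {g | g ∈ G ∧ ∃ v : List (Fin m), v.length = n ∧
    ∀ u : List (Fin m), ¬ v <+: u → g.apply u = u}

/-- A weakly branch group: spherically transitive with nontrivial rigid layer stabilisers. -/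
def WeaklyBranch (G : Subgroup (TreeAut m)) : Prop :=
  SphericallyTransitive G ∧ ∀ n : ℕ, rigidLayerStab G n ≠ ⊥

/-- `H` is weakly regular branch over `K ≤ H` if `ψ₁(St_K(1)) ⊇ K × ⋯ × K`. -/
def WeaklyRegularBranchOver (H K : Subgroup (TreeAut m)) : Prop :=
  K ≤ H ∧ ∀ f : Fin m → TreeAut m, (∀ x, f x ∈ K) → TreeAut.cons 1 f ∈ K

/-- The portrait of the `i`-th Basilica monomorphism `β^s_i` applied to `g`,
computed by recursion over vertices. -/
def betaLabel [NeZero m] (s : ℕ) : List (Fin m) → ℕ → TreeAut m → Equiv.Perm (Fin m)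
  | [], i, g => if i = 0 then g.label [] else 1
  | x :: u, i, g =>
      if i = 0 then betaLabel s u (s - 1) (g.sec [x])
      else if x = 0 then betaLabel s u (i - 1) g else 1

/-- The Basilica monomorphism `β^s_i : Aut(T) → Aut(T)`, satisfying
`β_i(g) = ψ₁⁻¹(β_{i-1}(g), 1, …, 1)` for `1 ≤ i ≤ s-1` and
`β_0(g) = g|^ε · ψ₁⁻¹(β_{s-1}(g|_0), …, β_{s-1}(g|_{m-1}))`. -/
def betaAut [NeZero m] (s i : ℕ) (g : TreeAut m) : TreeAut m := ⟨fun u => betaLabel s u i g⟩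

/-- The `s`-th Basilica group of `G`. -/
def basilica [NeZero m] (s : ℕ) (G : Subgroup (TreeAut m)) : Subgroup (TreeAut m) :=
  Subgroup.closure {b | ∃ g ∈ G, ∃ i < s, b = betaAut s i g}

/-- The subgroup `S_i = ⟨β_j(G) : j ≠ i⟩` of the `s`-th Basilica group. -/
def Ssub [NeZero m] (s i : ℕ) (G : Subgroup (TreeAut m)) : Subgroup (TreeAut m) :=
  Subgroup.closure {b | ∃ g ∈ G, ∃ j < s, j ≠ i ∧ b = betaAut s j g}

/-- The normal closure `N_i` of `S_i` in the `s`-th Basilica group of `G`. -/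
def Nsub [NeZero m] (s i : ℕ) (G : Subgroup (TreeAut m)) : Subgroup (TreeAut m) :=
  Subgroup.closure {x | ∃ b ∈ basilica s G, ∃ y ∈ Ssub s i G, x = b * y * b⁻¹}

/-- The `i`-th splitting kernel `K_i = β_i⁻¹(β_i(G) ∩ N_i)` of `G`, as a set. -/
def Kset [NeZero m] (s i : ℕ) (G : Subgroup (TreeAut m)) : Set (TreeAut m) :=
  {g | g ∈ G ∧ betaAut s i g ∈ Nsub s i G}

/-- The portrait of the monomorphism `π_i` (for the `d`-fold diagonal construction). -/
def piLabel (d : ℕ) : List (Fin m) → ℕ → TreeAut m → Equiv.Perm (Fin m)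
  | [], i, g => if i = 0 then g.label [] else 1
  | x :: u, i, g =>
      if i = 0 then piLabel d u (d - 1) (g.sec [x])
      else piLabel d u (i - 1) g

/-- The monomorphism `π_i : Aut(T) → Aut(T)`, satisfying
`π_0(g) = g|^ε · ψ₁⁻¹(π_{d-1}(g|_0), …, π_{d-1}(g|_{m-1}))` and
`π_i(g) = ψ₁⁻¹(π_{i-1}(g), …, π_{i-1}(g))` for `1 ≤ i ≤ d-1`. -/
def piAut (d i : ℕ) (g : TreeAut m) : TreeAut m := ⟨fun u => piLabel d u i g⟩

/-- The generator of the `m`-adic odometer: `a = σ · ψ₁⁻¹(a, 1, …, 1)` with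
`σ = (0 1 … m-1)`. -/
def odometer (m : ℕ) [NeZero m] : TreeAut m :=
  ⟨fun u => if ∀ x ∈ u, x = 0 then finRotate m else 1⟩

/-- The group `O_m^d = D_d(O_m) = ⟨π_i(a) : 0 ≤ i ≤ d-1⟩`. -/
def OdPow (m d : ℕ) [NeZero m] : Subgroup (TreeAut m) :=
  Subgroup.closure {x | ∃ i < d, x = piAut d i (odometer m)}

/-- The group `Γ` of all automorphisms all of whose labels are powers of the
cycle `σ = (0 1 … m-1)`. -/
def Gamma (m : ℕ) : Subgroup (TreeAut m) where
  carrier := {g | ∀ u : List (Fin m), g.label u ∈ Subgroup.zpowers (finRotate m)}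
  one_mem' := by
    intro u
    rw [TreeAut.one_label]
    exact one_mem _
  mul_mem' := by
    intro a b ha hb u
    rw [TreeAut.mul_label]
    exact mul_mem (ha _) (hb _)
  inv_mem' := by
    intro a ha u
    rw [TreeAut.inv_label]
    exact inv_mem (ha _)

/-- The Hausdorff dimension of `G ≤ Γ` relative to `Γ`. -/
noncomputable def hdim (m : ℕ) (G : Subgroup (TreeAut m)) : ℝ :=
  Filter.liminf (fun n : ℕ =>
    Real.logb m ((layerStab G n).relIndex G) /
      Real.logb m ((layerStab (Gamma m) n).relIndex (Gamma m))) Filter.atTop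

/-- The series of obstructions `o_G(n) = m·log_m|L_G(n-1)| - log_m|L_G(n)|` (for `n ≥ 1`),
where `L_G(n) = St_G(n)/St_G(n+1)`. -/
noncomputable def obstruction (m : ℕ) (G : Subgroup (TreeAut m)) (n : ℕ) : ℝ :=
  m * Real.logb m ((layerStab G n).relIndex (layerStab G (n - 1)))
    - Real.logb m ((layerStab G (n + 1)).relIndex (layerStab G n))

/-- The permutation group induced by `G` on the first layer acts regularly on `X`. -/
def RegularRootAction (G : Subgroup (TreeAut m)) : Prop :=
  (∀ x y : Fin m, ∃ g ∈ G, g.label [] x = y) ∧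
    ∀ g ∈ G, ∀ x : Fin m, g.label [] x = x → g.label [] = 1


/-!
`β₀` copies `g` onto the vertices `δ(u) = u₁ 0^{s-1} u₂ 0^{s-1} ⋯`: the section of `β₀(g)`
at `δ(u)` is `β₀(g|_u)`, and every label of `β₀(g)` away from these vertices is trivial. So a
nontrivial `g ∈ rst_G(v)` gives a nontrivial `β₀(g) ∈ rst(δ(v))`, and `|δ(v)| ≥ |v|`.
For spherical transitivity it suffices to move `0^p a` to `0^p b` for all `p`, `a`, `b`:
writing `p = qs + r` with `r < s`, the element `β_r(g)` does this for any `g ∈ G` moving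
`0^q a` to `0^q b`.
-/

namespace TreeAut

lemma apply_append_singleton (g : TreeAut m) (u : List (Fin m)) (x : Fin m) :
    g.apply (u ++ [x]) = g.apply u ++ [g.label u x] := by
  rw [apply_append, apply_cons, sec_label, List.append_nil, apply_nil]

lemma apply_take (g : TreeAut m) (u : List (Fin m)) (n : ℕ) :
    g.apply (u.take n) = (g.apply u).take n := by
  induction u generalizing g n with
  | nil => simp
  | cons x u ih => cases n <;> simp [apply_cons, ih]

end TreeAut

open TreeAut

def IsRigidAt (g : TreeAut m) (v : List (Fin m)) : Prop :=
  ∀ u : List (Fin m), ¬ v <+: u → g.apply u = u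

lemma IsRigidAt.of_prefix {g : TreeAut m} {v w : List (Fin m)} (hg : IsRigidAt g w)
    (hvw : v <+: w) : IsRigidAt g v :=
  fun u hu => hg u fun hwu => hu (hvw.trans hwu)

lemma isRigidAt_iff_label {g : TreeAut m} {v : List (Fin m)} :
    IsRigidAt g v ↔ ∀ w : List (Fin m), ¬ v <+: w → g.label w = 1 := by
  constructor
  · intro hg w hw
    have hfix : ∀ x, ¬ v <+: w ++ [x] → g.label w x = x := fun x hx => by
      simpa [apply_append_singleton, hg w hw] using hg _ hx
    refine Equiv.ext fun x => ?_
    rw [Equiv.Perm.one_apply]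
    by_cases hx : v <+: w ++ [x]
    · -- `w ++ [x]` is the only child of `w` that may move, and no permutation moves just one point
      have hv : v = w ++ [x] := (List.prefix_concat_iff.1 hx).resolve_right hw
      by_contra hne
      refine hne ((g.label w).injective (hfix _ fun hy => hne ?_))
      rw [hv] at hy
      simpa [eq_comm] using hy
    · exact hfix x hx
  · intro hg u hu
    induction u using List.reverseRecOn with
    | nil => rfl
    | append_singleton u x ih =>
      have hvu : ¬ v <+: u := fun h => hu (h.trans (List.prefix_append u [x]))
      rw [apply_append_singleton, ih hvu, hg u hvu, Equiv.Perm.one_apply]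

lemma rigidLayerStab_ne_bot_iff {G : Subgroup (TreeAut m)} {n : ℕ} :
    rigidLayerStab G n ≠ ⊥ ↔
      ∃ g ∈ G, g ≠ 1 ∧ ∃ v : List (Fin m), n ≤ v.length ∧ IsRigidAt g v := by
  rw [rigidLayerStab, ne_eq, Subgroup.closure_eq_bot_iff, Set.not_subset]
  constructor
  · rintro ⟨g, ⟨hgG, v, hv, hgv⟩, hg1⟩
    exact ⟨g, hgG, hg1, v, hv.ge, hgv⟩
  · rintro ⟨g, hgG, hg1, v, hv, hgv⟩
    exact ⟨g, ⟨hgG, v.take n, List.length_take_of_le hv, hgv.of_prefix (v.take_prefix n)⟩,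
      hg1⟩

section

variable [NeZero m]

lemma sphericallyTransitive_of_forall_replicate_append {H : Subgroup (TreeAut m)}
    (hH : ∀ (p : ℕ) (a b : Fin m), ∃ c ∈ H,
      c.apply (List.replicate p 0 ++ [a]) = List.replicate p 0 ++ [b]) :
    SphericallyTransitive H := by
  have hzero : ∀ u : List (Fin m), ∃ c ∈ H, c.apply u = List.replicate u.length 0 := by
    intro u
    induction u using List.reverseRecOn with
    | nil => exact ⟨1, H.one_mem, rfl⟩
    | append_singleton u x ih =>
      obtain ⟨c, hcH, hc⟩ := ih
      obtain ⟨d, hdH, hd⟩ := hH u.length (c.label u x) 0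
      refine ⟨d * c, H.mul_mem hdH hcH, ?_⟩
      rw [mul_apply, apply_append_singleton, hc, hd, List.length_append, List.length_singleton,
        List.replicate_succ']
  intro u w huw
  obtain ⟨c, hcH, hc⟩ := hzero u
  obtain ⟨d, hdH, hd⟩ := hzero w
  refine ⟨d⁻¹ * c, H.mul_mem (H.inv_mem hdH) hcH, apply_injective d ?_⟩
  rw [← mul_apply, mul_inv_cancel_left, hc, hd, huw]

section Beta

variable (s : ℕ)

@[simp] lemma betaAut_zero_label_nil (g : TreeAut m) : (betaAut s 0 g).label [] = g.label [] :=
  rfl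

lemma betaAut_succ_label_nil (j : ℕ) (g : TreeAut m) : (betaAut s (j + 1) g).label [] = 1 :=
  rfl

lemma betaAut_zero_sec_singleton (g : TreeAut m) (x : Fin m) :
    (betaAut s 0 g).sec [x] = betaAut s (s - 1) (g.sec [x]) :=
  rfl

lemma betaAut_succ_sec_zero (j : ℕ) (g : TreeAut m) :
    (betaAut s (j + 1) g).sec [0] = betaAut s j g :=
  rfl

lemma betaAut_succ_sec_of_ne_zero (j : ℕ) (g : TreeAut m) {x : Fin m} (hx : x ≠ 0) :
    (betaAut s (j + 1) g).sec [x] = 1 :=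
  ext_label fun _ => if_neg hx

lemma betaAut_sec_replicate (j : ℕ) (g : TreeAut m) :
    (betaAut s j g).sec (List.replicate j 0) = betaAut s 0 g := by
  induction j with
  | zero => rfl
  | succ j ih => rw [List.replicate_succ, ← List.singleton_append, ← sec_sec,
      betaAut_succ_sec_zero, ih]

lemma betaAut_apply_replicate (j : ℕ) (g : TreeAut m) :
    (betaAut s j g).apply (List.replicate j 0) = List.replicate j 0 := by
  induction j with
  | zero => rfl
  | succ j ih => rw [List.replicate_succ, apply_cons, betaAut_succ_label_nil,
      betaAut_succ_sec_zero, ih, Equiv.Perm.one_apply]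

def deltaWord : List (Fin m) → List (Fin m)
  | [] => []
  | x :: u => x :: (List.replicate (s - 1) 0 ++ deltaWord u)

@[simp] lemma deltaWord_nil : deltaWord (m := m) s [] = [] := rfl

@[simp] lemma deltaWord_cons (x : Fin m) (u : List (Fin m)) :
    deltaWord s (x :: u) = x :: (List.replicate (s - 1) 0 ++ deltaWord s u) := rfl

lemma deltaWord_append (u v : List (Fin m)) :
    deltaWord s (u ++ v) = deltaWord s u ++ deltaWord s v := by
  induction u with
  | nil => rfl
  | cons x u ih => simp [ih]

lemma deltaWord_replicate_zero {s : ℕ} (hs : 1 ≤ s) (q : ℕ) :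
    deltaWord s (List.replicate q (0 : Fin m)) = List.replicate (q * s) 0 := by
  induction q with
  | zero => simp
  | succ q ih =>
    rw [List.replicate_succ, deltaWord_cons, ih, ← List.replicate_add, ← List.replicate_succ]
    congr 1
    rw [Nat.succ_mul]
    omega

lemma length_le_length_deltaWord (u : List (Fin m)) : u.length ≤ (deltaWord s u).length := by
  induction u with
  | nil => rfl
  | cons x u ih =>
    simp only [deltaWord_cons, List.length_cons, List.length_append]
    omega

lemma deltaWord_prefix_deltaWord {u v : List (Fin m)} (h : u <+: v) :
    deltaWord s u <+: deltaWord s v := by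
  obtain ⟨t, rfl⟩ := h
  rw [deltaWord_append]
  exact List.prefix_append _ _

lemma betaAut_zero_sec_deltaWord (g : TreeAut m) (u : List (Fin m)) :
    (betaAut s 0 g).sec (deltaWord s u) = betaAut s 0 (g.sec u) := by
  induction u generalizing g with
  | nil => rfl
  | cons x u ih =>
    rw [deltaWord_cons, ← List.singleton_append, ← sec_sec, ← sec_sec,
      betaAut_zero_sec_singleton, betaAut_sec_replicate, ih, sec_sec, List.singleton_append]

lemma betaAut_zero_label_deltaWord (g : TreeAut m) (u : List (Fin m)) :
    (betaAut s 0 g).label (deltaWord s u) = g.label u := by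
  simpa using congrArg (label · []) (betaAut_zero_sec_deltaWord s g u)

lemma betaAut_zero_apply_deltaWord (g : TreeAut m) (u : List (Fin m)) :
    (betaAut s 0 g).apply (deltaWord s u) = deltaWord s (g.apply u) := by
  induction u generalizing g with
  | nil => rfl
  | cons x u ih =>
    rw [deltaWord_cons, apply_cons, apply_append, betaAut_zero_sec_singleton,
      betaAut_apply_replicate, betaAut_sec_replicate, ih, apply_cons, deltaWord_cons,
      betaAut_zero_label_nil]

lemma betaAut_apply_replicate_append_deltaWord (j : ℕ) (g : TreeAut m) (u : List (Fin m)) :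
    (betaAut s j g).apply (List.replicate j 0 ++ deltaWord s u)
      = List.replicate j 0 ++ deltaWord s (g.apply u) := by
  rw [apply_append, betaAut_apply_replicate, betaAut_sec_replicate, betaAut_zero_apply_deltaWord]

lemma betaAut_label_eq_one {j : ℕ} {g : TreeAut m} {w : List (Fin m)}
    (hw : ∀ u, w ≠ List.replicate j 0 ++ deltaWord s u) : (betaAut s j g).label w = 1 := by
  induction w generalizing j g with
  | nil =>
    cases j with
    | zero => exact absurd rfl (hw [])
    | succ j => rfl
  | cons x w ih =>
    show ((betaAut s j g).sec [x]).label w = 1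
    cases j with
    | zero =>
      rw [betaAut_zero_sec_singleton]
      exact ih fun u hu => hw (x :: u) (by simp [hu])
    | succ j =>
      by_cases hx : x = 0
      · subst hx
        rw [betaAut_succ_sec_zero]
        exact ih fun u hu => hw u (by simp [hu, List.replicate_succ])
      · rw [betaAut_succ_sec_of_ne_zero s j g hx, one_label]

end Beta

lemma betaAut_zero_isRigidAt (s : ℕ) {g : TreeAut m} {v : List (Fin m)} (hg : IsRigidAt g v) :
    IsRigidAt (betaAut s 0 g) (deltaWord s v) := by
  rw [isRigidAt_iff_label] at hg ⊢
  intro w hw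
  by_cases hδ : ∃ u, w = deltaWord s u
  · obtain ⟨u, rfl⟩ := hδ
    rw [betaAut_zero_label_deltaWord]
    exact hg u fun hvu => hw (deltaWord_prefix_deltaWord s hvu)
  · exact betaAut_label_eq_one s fun u hu => hδ ⟨u, by simpa using hu⟩

lemma betaAut_zero_ne_one (s : ℕ) {g : TreeAut m} (hg : g ≠ 1) : betaAut s 0 g ≠ 1 := by
  refine fun h => hg (ext_label fun u => ?_)
  rw [← betaAut_zero_label_deltaWord s, h, one_label, one_label]

lemma exists_mem_basilica_apply_replicate_append {s : ℕ} (hs : 1 ≤ s)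
    {G : Subgroup (TreeAut m)} (hG : SphericallyTransitive G) (p : ℕ) (a b : Fin m) :
    ∃ c ∈ basilica s G, c.apply (List.replicate p 0 ++ [a]) = List.replicate p 0 ++ [b] := by
  obtain ⟨g, hgG, hg⟩ := hG (List.replicate (p / s) 0 ++ [a]) (List.replicate (p / s) 0 ++ [b])
    (by simp)
  set c := betaAut s (p % s) g
  refine ⟨c, Subgroup.subset_closure ⟨g, hgG, p % s, Nat.mod_lt p hs, rfl⟩, ?_⟩
  have hδ : ∀ x : Fin m,
      List.replicate (p % s) 0 ++ deltaWord s (List.replicate (p / s) 0 ++ [x])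
        = List.replicate p 0 ++ [x] ++ List.replicate (s - 1) 0 := by
    intro x
    rw [deltaWord_append, deltaWord_replicate_zero hs, ← List.append_assoc,
      ← List.replicate_add, Nat.mod_add_div']
    simp
  calc c.apply (List.replicate p 0 ++ [a])
      = (c.apply (List.replicate p 0 ++ [a] ++ List.replicate (s - 1) 0)).take (p + 1) := by
        rw [← apply_take, List.take_left' (by simp)]
    _ = (List.replicate p 0 ++ [b] ++ List.replicate (s - 1) 0).take (p + 1) := by
        rw [← hδ, betaAut_apply_replicate_append_deltaWord, hg, hδ]
    _ = List.replicate p 0 ++ [b] := List.take_left' (by simp)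

lemma basilica_sphericallyTransitive {s : ℕ} (hs : 1 ≤ s) {G : Subgroup (TreeAut m)}
    (hG : SphericallyTransitive G) : SphericallyTransitive (basilica s G) :=
  sphericallyTransitive_of_forall_replicate_append
    (exists_mem_basilica_apply_replicate_append hs hG)

end

theorem basilica_weaklyBranch_general {m : ℕ} [NeZero m]
    (G : Subgroup (TreeAut m)) (hG : WeaklyBranch G)
    (s : ℕ) (hs : 1 ≤ s) :
    WeaklyBranch (basilica s G) := by
  refine ⟨basilica_sphericallyTransitive hs hG.1, fun n => ?_⟩
  obtain ⟨g, hgG, hg1, v, hv, hgv⟩ := rigidLayerStab_ne_bot_iff.1 (hG.2 n)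
  refine rigidLayerStab_ne_bot_iff.2 ⟨betaAut s 0 g, ?_, betaAut_zero_ne_one s hg1,
    deltaWord s v, hv.trans (length_le_length_deltaWord s v), betaAut_zero_isRigidAt s hgv⟩
  exact Subgroup.subset_closure ⟨g, hgG, 0, hs, rfl⟩

/-- If `G ≤ Aut(T)` is a weakly branch group, then for every `s ≥ 1`
the `s`-th Basilica group `Bas_s(G)` is a weakly branch group. -/
theorem basilica_weaklyBranch {m : ℕ} [NeZero m] (hm : 2 ≤ m)
    (G : Subgroup (TreeAut m)) (hG : WeaklyBranch G)
    (s : ℕ) (hs : 1 ≤ s) :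
    WeaklyBranch (basilica s G) :=
  basilica_weaklyBranch_general G hG s hs

end Basilica
end

section
/- Let s ≥ 1 and let i, j ∈ {0,…,s−1} with i ≠ j. Let st(0̄) denote the stabiliser in Aut(T) of the infinite ray 0̄ = {0^n : n ∈ ℕ}. Then every element of β_i(st(0̄)) commutes with every element of β_j(st(0̄)), i.e. [β_i(st(0̄)), β_j(st(0̄))] = 1. -/
/-!
Groups of automorphisms of the `m`-regular rooted tree, encoded via portraits:
an automorphism is determined by the family of its labels (local actions)
`label : List (Fin m) → Equiv.Perm (Fin m)`.
-/

namespace Basilica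

variable {m : ℕ}

namespace TreeAut

variable [NeZero m]

def FixesZeroRay (g : TreeAut m) : Prop :=
  ∀ n : ℕ, g.apply (List.replicate n (0 : Fin m)) = List.replicate n (0 : Fin m)

namespace FixesZeroRay

variable {g : TreeAut m}

lemma label_nil_zero (hg : FixesZeroRay g) : g.label [] 0 = 0 :=
  (List.cons.inj (hg 1)).1

lemma sec_zero (hg : FixesZeroRay g) : FixesZeroRay (g.sec [0]) :=
  fun n => (List.cons.inj (hg (n + 1))).2

end FixesZeroRay

/-- If `b = ψ₁⁻¹(c, 1, …, 1)` and `a` fixes the vertex `0`, then `a` and `b` can only fail to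
commute below the vertex `0`, where their sections are `a|_0` and `c`. -/
lemma mul_label_cons_comm {a b : TreeAut m} (ha : a.label [] 0 = 0) (hb : b.label [] = 1)
    (hb' : ∀ x, x ≠ 0 → b.sec [x] = 1) {u : List (Fin m)}
    (hu : (a.sec [0] * b.sec [0]).label u = (b.sec [0] * a.sec [0]).label u) (x : Fin m) :
    (a * b).label (x :: u) = (b * a).label (x :: u) := by
  change ((a * b).sec [x]).label u = ((b * a).sec [x]).label u
  have hbx : b.apply [x] = [x] := by simp [apply_cons, hb]
  rw [mul_sec, mul_sec, hbx]
  change (a.sec [x] * b.sec [x]).label u = (b.sec [a.label [] x] * a.sec [x]).label u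
  rcases eq_or_ne x 0 with rfl | hx
  · rwa [ha]
  · have hax : a.label [] x ≠ 0 := ha ▸ (a.label []).injective.ne hx
    rw [hb' x hx, hb' _ hax, mul_one, one_mul]

end TreeAut

section BetaAut

variable [NeZero m] {s i : ℕ} {g : TreeAut m}

lemma betaAut_label_nil :
    (betaAut s i g).label [] = if i = 0 then g.label [] else 1 := rfl

lemma betaAut_zero_sec (x : Fin m) :
    (betaAut s 0 g).sec [x] = betaAut s (s - 1) (g.sec [x]) :=
  TreeAut.ext_label fun _ => by simp [betaAut, betaLabel]

lemma betaAut_sec_zero_of_ne_zero (hi : i ≠ 0) :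
    (betaAut s i g).sec [0] = betaAut s (i - 1) g :=
  TreeAut.ext_label fun _ => by simp [betaAut, betaLabel, hi]

lemma betaAut_sec_of_ne_zero (hi : i ≠ 0) {x : Fin m} (hx : x ≠ 0) :
    (betaAut s i g).sec [x] = 1 :=
  TreeAut.ext_label fun _ => by simp [betaAut, betaLabel, hi, hx]

lemma betaAut_label_nil_zero (hg : g.FixesZeroRay) : (betaAut s i g).label [] 0 = 0 := by
  rw [betaAut_label_nil]
  split_ifs
  exacts [hg.label_nil_zero, rfl]

/-- For `j ≠ 0`, `β_j(h) = ψ₁⁻¹(β_{j-1}(h), 1, …, 1)`, while `β_i(g)|_0` is `β_{i-1}(g)` or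
`β_{s-1}(g|_0)`; the indices stay distinct and the ray stabiliser is preserved, so we recurse
along the word. -/
lemma betaAut_mul_label_comm (u : List (Fin m)) :
    ∀ {i j : ℕ} {g h : TreeAut m}, i < s → j < s → i ≠ j → g.FixesZeroRay → h.FixesZeroRay →
      (betaAut s i g * betaAut s j h).label u = (betaAut s j h * betaAut s i g).label u := by
  induction u with
  | nil =>
    intro i j g h _ _ hij _ _
    rcases eq_or_ne j 0 with rfl | hj0
    · simp [betaAut_label_nil, hij]
    · simp [betaAut_label_nil, hj0]
  | cons x u ih =>
    intro i j g h hi hj hij hg hh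
    wlog hj0 : j ≠ 0 generalizing i j g h
    · exact (this hj hi hij.symm hh hg (by omega)).symm
    refine TreeAut.mul_label_cons_comm (betaAut_label_nil_zero hg)
      (by simp [betaAut_label_nil, hj0]) (fun _ => betaAut_sec_of_ne_zero hj0) ?_ x
    rw [betaAut_sec_zero_of_ne_zero hj0]
    rcases eq_or_ne i 0 with rfl | hi0
    · rw [betaAut_zero_sec]
      exact ih (by omega) (by omega) (by omega) hg.sec_zero hh
    · rw [betaAut_sec_zero_of_ne_zero hi0]
      exact ih (by omega) (by omega) (by omega) hg hh

end BetaAut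

theorem beta_rayStabiliser_commute_general {m : ℕ} [NeZero m]
    (s : ℕ) (i j : ℕ) (hi : i < s) (hj : j < s) (hij : i ≠ j)
    (g h : TreeAut m)
    (hg : ∀ n : ℕ, g.apply (List.replicate n (0 : Fin m)) = List.replicate n (0 : Fin m))
    (hh : ∀ n : ℕ, h.apply (List.replicate n (0 : Fin m)) = List.replicate n (0 : Fin m)) :
    Commute (betaAut s i g) (betaAut s j h) :=
  TreeAut.ext_label fun u => betaAut_mul_label_comm u hi hj hij hg hh

/-- For `s ≥ 1`, `i ≠ j ∈ {0, …, s-1}`, and `g, h` in the stabiliser of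
the infinite ray `0̄ = {0^n : n ∈ ℕ}`, the elements `β_i(g)` and `β_j(h)` commute, i.e.
`[β_i(st(0̄)), β_j(st(0̄))] = 1`. -/
theorem beta_rayStabiliser_commute {m : ℕ} [NeZero m] (hm : 2 ≤ m)
    (s : ℕ) (hs : 1 ≤ s) (i j : ℕ) (hi : i < s) (hj : j < s) (hij : i ≠ j)
    (g h : TreeAut m)
    (hg : ∀ n : ℕ, g.apply (List.replicate n (0 : Fin m)) = List.replicate n (0 : Fin m))
    (hh : ∀ n : ℕ, h.apply (List.replicate n (0 : Fin m)) = List.replicate n (0 : Fin m)) :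
    Commute (betaAut s i g) (betaAut s j h) :=
  beta_rayStabiliser_commute_general s i j hi hj hij g h hg hh

end Basilica
end
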